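/- For every prime p and positive integers n, m, B_{n+p^m} \equiv (B_{p^m} - 1) * B_n + B_{n+1} (mod p). -/

import Mathlib

/-!
The Touchard polynomials `Tₙ = ∑ₖ S(n, k) Xᵏ` satisfy `Tₙ₊₁ = X (Tₙ + Tₙ')`. Since
`k! S(n, k)` is the `k`-th forward difference of `x ↦ xⁿ` at `0` and `xᵖ = x` modulo `p`,
`S(p, k) ≡ S(1, k)` for `k < p`, so `Tₚ ≡ X + Xᵖ`. As `Xᵖ` has derivative `0` in characteristic
`p`, induction gives `Tₙ₊ₚ ≡ Tₙ₊₁ + Xᵖ Tₙ`, and evaluating at `1` gives Touchard's congruence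
`Bₙ₊ₚ ≡ Bₙ₊₁ + Bₙ`. Thus the shift operator on the Bell numbers mod `p` is annihilated by
`Xᵖ - X - 1`, which by Frobenius divides `X^(p^m) - X - m`; hence `Bₙ₊ₚᵐ ≡ Bₙ₊₁ + m Bₙ`, and in
particular `Bₚᵐ ≡ 1 + m`.
-/

/-- Stirling numbers of the second kind. -/
def stirling : ℕ → ℕ → ℕ
  | 0, 0 => 1
  | 0, _ + 1 => 0
  | _ + 1, 0 => 0
  | n + 1, k + 1 => stirling n k + (k + 1) * stirling n (k + 1)

/-- The `n`-th Bell number. -/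
def bell (n : ℕ) : ℕ := ∑ k ∈ Finset.range (n + 1), stirling n k

open Finset Polynomial
open scoped Nat fwdDiff

theorem stirling_eq_stirlingSecond : stirling = Nat.stirlingSecond := by
  ext n k
  induction n generalizing k with
  | zero => cases k <;> rfl
  | succ n ih =>
    cases k with
    | zero => rfl
    | succ k => rw [stirling, Nat.stirlingSecond_succ_succ, ih, ih, add_comm]

theorem X_pow_eq_sum_stirlingSecond_mul_descPochhammer (R : Type*) [CommRing R] (n : ℕ) :
    (X : R[X]) ^ n = ∑ k ∈ range (n + 1), (Nat.stirlingSecond n k : R[X]) * descPochhammer R k := by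
  induction n with
  | zero => simp
  | succ n ih =>
    set f : ℕ → R[X] := fun k ↦ ((k * Nat.stirlingSecond n k : ℕ) : R[X]) * descPochhammer R k
    have hshift : ∑ k ∈ range (n + 1), f (k + 1) = ∑ k ∈ range (n + 1), f k := by
      have h := (sum_range_succ' f (n + 1)).symm.trans (sum_range_succ f (n + 1))
      simpa [f, Nat.stirlingSecond_eq_zero_of_lt n.lt_succ_self] using h
    rw [sum_range_succ', pow_succ, ih, sum_mul]
    simp only [Nat.stirlingSecond_succ_succ, Nat.stirlingSecond_succ_zero, Nat.cast_zero,
      zero_mul, add_zero, Nat.cast_add, add_mul (R := R[X]), sum_add_distrib]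
    rw [hshift, ← sum_add_distrib]
    refine sum_congr rfl fun k _ ↦ ?_
    rw [descPochhammer_succ_right]
    push_cast [f]
    ring

-- `Δ_[h] ^[k]` needs the space: `]^` is a token of the exterior power notation.
theorem AddMonoidHom.map_fwdDiff_iter {M G H : Type*} [AddCommMonoid M] [AddCommGroup G]
    [AddCommGroup H] (g : G →+ H) (h : M) (f : M → G) (k : ℕ) (y : M) :
    g (Δ_[h] ^[k] f y) = Δ_[h] ^[k] (g ∘ f) y := by
  simp [fwdDiff_iter_eq_sum_shift, map_sum, map_zsmul]

theorem fwdDiff_iter_pow_eq_factorial_mul_stirlingSecond (R : Type*) [CommRing R] (n k : ℕ) :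
    Δ_[1] ^[k] (fun x : ℕ ↦ (x : R) ^ n) 0 = k ! * Nat.stirlingSecond n k := by
  have hchoose : (fun x : ℕ ↦ (x : ℤ) ^ n) =
      ∑ j ∈ range (n + 1), (Nat.stirlingSecond n j * j ! : ℤ) • fun x : ℕ ↦ (x.choose j : ℤ) := by
    ext x
    have := congrArg (eval (x : ℤ)) (X_pow_eq_sum_stirlingSecond_mul_descPochhammer ℤ n)
    simpa [eval_finsetSum, descPochhammer_eval_eq_descFactorial,
      Nat.descFactorial_eq_factorial_mul_choose, mul_assoc] using this
  have hint : Δ_[1] ^[k] (fun x : ℕ ↦ (x : ℤ) ^ n) 0 = k ! * Nat.stirlingSecond n k := by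
    rw [hchoose, fwdDiff_iter_finsetSum, Finset.sum_apply]
    simp only [fwdDiff_iter_const_smul, Pi.smul_apply, fwdDiff_iter_choose_zero, smul_eq_mul,
      mul_ite, mul_one, mul_zero, sum_ite_eq, mem_range]
    split_ifs with hk
    · ring
    · simp [Nat.stirlingSecond_eq_zero_of_lt (not_lt.mp hk)]
  have := (Int.castRingHom R).toAddMonoidHom.map_fwdDiff_iter 1 (fun x : ℕ ↦ (x : ℤ) ^ n) k 0
  simpa [Function.comp_def, hint] using this.symm

theorem Nat.stirlingSecond_prime_modEq {p k : ℕ} [Fact p.Prime] (hk : k < p) :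
    Nat.stirlingSecond p k ≡ Nat.stirlingSecond 1 k [MOD p] := by
  rw [← ZMod.natCast_eq_natCast_iff]
  have hdiff_p := fwdDiff_iter_pow_eq_factorial_mul_stirlingSecond (ZMod p) p k
  have hdiff_one := fwdDiff_iter_pow_eq_factorial_mul_stirlingSecond (ZMod p) 1 k
  simp only [ZMod.pow_card, pow_one] at hdiff_p hdiff_one
  have hfac : (k ! : ZMod p) ≠ 0 := by
    rw [Ne, ZMod.natCast_eq_zero_iff, (Fact.out : p.Prime).dvd_factorial, not_le]
    exact hk
  exact mul_left_cancel₀ hfac (hdiff_p.symm.trans hdiff_one)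

section touchard

variable {R : Type*} [CommRing R]

variable (R) in
noncomputable def touchard (n : ℕ) : R[X] :=
  ∑ k ∈ range (n + 1), C (Nat.stirlingSecond n k : R) * X ^ k

theorem coeff_touchard (n k : ℕ) : (touchard R n).coeff k = Nat.stirlingSecond n k := by
  simp only [touchard, finsetSum_coeff, coeff_C_mul_X_pow, sum_ite_eq, mem_range]
  split_ifs with hk
  · rfl
  · simp [Nat.stirlingSecond_eq_zero_of_lt (not_lt.mp hk)]

theorem touchard_zero : touchard R 0 = 1 := by
  simp [touchard]

theorem touchard_succ (n : ℕ) :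
    touchard R (n + 1) = X * (touchard R n + derivative (touchard R n)) := by
  ext (_ | k)
  · simp [coeff_touchard]
  · simp only [coeff_X_mul, coeff_add, coeff_derivative, coeff_touchard,
      Nat.stirlingSecond_succ_succ]
    push_cast
    ring

theorem eval_one_touchard (n : ℕ) : (touchard R n).eval 1 = bell n := by
  simp [touchard, eval_finsetSum, bell, stirling_eq_stirlingSecond]

variable (p : ℕ) [Fact p.Prime] [CharP R p]

theorem touchard_prime : touchard R p = touchard R 1 + X ^ p := by
  have hp1 : 1 < p := (Fact.out : p.Prime).one_lt
  ext k
  rw [coeff_add, coeff_touchard, coeff_touchard, coeff_X_pow]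
  rcases lt_trichotomy k p with hk | rfl | hk
  · rw [(CharP.natCast_eq_natCast R p).mpr (Nat.stirlingSecond_prime_modEq hk), if_neg hk.ne,
      add_zero]
  · simp [Nat.stirlingSecond_self, Nat.stirlingSecond_eq_zero_of_lt hp1]
  · simp [Nat.stirlingSecond_eq_zero_of_lt hk, Nat.stirlingSecond_eq_zero_of_lt (hp1.trans hk),
      hk.ne']

theorem touchard_add_prime (n : ℕ) :
    touchard R (n + p) = touchard R (n + 1) + X ^ p * touchard R n := by
  induction n with
  | zero => rw [zero_add, touchard_prime, touchard_zero, mul_one]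
  | succ n ih =>
    have hderiv : derivative (X ^ p : R[X]) = 0 := by simp [derivative_X_pow]
    rw [add_right_comm, touchard_succ, ih, derivative_add, derivative_mul, hderiv, zero_mul,
      zero_add, touchard_succ (n + 1), touchard_succ n]
    ring

theorem cast_bell_add_prime (n : ℕ) : (bell (n + p) : R) = bell (n + 1) + bell n := by
  simpa [eval_one_touchard] using congrArg (eval 1) (touchard_add_prime (R := R) p n)

end touchard

section frobenius

variable {R : Type*} [CommRing R] (p : ℕ) [Fact p.Prime] [CharP R p]

theorem X_pow_sub_X_sub_one_dvd (m : ℕ) :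
    (X ^ p - X - 1 : R[X]) ∣ X ^ p ^ m - X - (m : R[X]) := by
  induction m with
  | zero => simp
  | succ m ih =>
    have hfrob : (X ^ p - X - 1 : R[X]) ^ p ^ m = X ^ p ^ (m + 1) - X ^ p ^ m - 1 := by
      rw [sub_pow_char_pow, sub_pow_char_pow, one_pow, ← pow_mul, ← pow_succ']
    have hsplit : X ^ p ^ (m + 1) - X - ((m + 1 : ℕ) : R[X]) =
        (X ^ p ^ m - X - (m : R[X])) + (X ^ p - X - 1) ^ p ^ m := by
      rw [hfrob]; push_cast; ring
    rw [hsplit]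
    exact dvd_add ih (dvd_pow_self _ (pow_ne_zero _ (Fact.out : p.Prime).ne_zero))

theorem add_prime_pow_of_add_prime {b : ℕ → R} (hb : ∀ n, b (n + p) = b (n + 1) + b n)
    (m n : ℕ) : b (n + p ^ m) = b (n + 1) + m * b n := by
  let shift : Module.End R (ℕ → R) := LinearMap.funLeft R R (· + 1)
  have hshift (f : ℕ → R) : shift f = fun n ↦ f (n + 1) := rfl
  have hshift_pow (k : ℕ) (f : ℕ → R) : (shift ^ k) f = fun n ↦ f (n + k) := by
    induction k generalizing f with
    | zero => rfl
    | succ k ih =>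
      rw [pow_succ, Module.End.mul_apply, ih, hshift]
      simp only [add_assoc]
  have hkill : aeval shift (X ^ p - X - 1 : R[X]) b = 0 := by
    ext n
    simp [hshift_pow, hshift, hb]
  obtain ⟨q, hq⟩ := X_pow_sub_X_sub_one_dvd (R := R) p m
  have := congrFun (congrArg (aeval shift · b) (hq.trans (mul_comm _ _))) n
  simp only [map_mul, Module.End.mul_apply, hkill, map_zero] at this
  simp only [aeval_sub, map_pow, aeval_X, map_natCast, LinearMap.sub_apply, hshift_pow, hshift,
    Module.End.natCast_apply, nsmul_eq_mul, Pi.sub_apply, Pi.mul_apply, Pi.natCast_apply,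
    Pi.zero_apply] at this
  linear_combination this

end frobenius

theorem bell_add_prime_pow_general (p n m : ℕ) (hp : p.Prime) :
    (bell (n + p ^ m) : ℤ) ≡ ((bell (p ^ m) : ℤ) - 1) * bell n + bell (n + 1) [ZMOD p] := by
  have := Fact.mk hp
  have hbell := add_prime_pow_of_add_prime p (b := fun n ↦ (bell n : ZMod p))
    (cast_bell_add_prime p) m
  have hpow : (bell (p ^ m) : ZMod p) = 1 + m := by
    simpa [show bell 1 = 1 from rfl, show bell 0 = 1 from rfl] using hbell 0
  rw [← ZMod.intCast_eq_intCast_iff]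
  push_cast
  rw [hbell n, hpow]
  ring

theorem bell_add_prime_pow (p n m : ℕ) (hp : p.Prime) (hn : 0 < n) (hm : 0 < m) :
    (bell (n + p ^ m) : ℤ) ≡ ((bell (p ^ m) : ℤ) - 1) * bell n + bell (n + 1) [ZMOD p] :=
  bell_add_prime_pow_general p n m hp
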